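/- arXiv:1911.07733 — 3 statements merged into one kernel-verified Lean document; each statement's English description precedes it below -/
import Mathlib

section
/- The binary digits of natural numbers are independent with respect to the relative measure: setting B_j := {n ∈ ℕ : the j-th binary digit of n equals 1} (where the j-th binary digit of n is ⌊n/2^{j-1}⌋ mod 2), each B_j is relatively measurable with μ_R(B_j) = 1/2, and for any finite set of distinct indices j_1 < ⋯ < j_m one has μ_R(B_{j_1} ∩ ⋯ ∩ B_{j_m}) = 2^{-m}. -/
/-- `A ⊆ ℕ` is relatively measurable with relative measure `c`. -/
def relDensTo (A : Set ℕ) (c : ℝ) : Prop :=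
  Filter.Tendsto
    (fun N : ℕ => (∑ n ∈ Finset.Icc 1 N, Set.indicator A (fun _ => (1 : ℝ)) n) / N)
    Filter.atTop (nhds c)

/-- `B j` is the set of naturals whose `j`-th binary digit equals `1`. -/
def binDigitSet (j : ℕ) : Set ℕ := {n : ℕ | n / 2 ^ (j - 1) % 2 = 1}

/-! If `T ⊆ {0, …, J-1}`, the set of `n` whose bits indexed by `T` are all `1` is periodic of
period `2^J`, and `n ↦ bitIndices n` matches its elements below `2^J` with the sets `S` such
that `T ⊆ S ⊆ {0, …, J-1}`, of which there are `2^(J - |T|)`. A periodic set has relative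
measure equal to its proportion in one period, here `2^(-|T|)`. -/

open Filter Topology Finset

theorem tendsto_div_natCast_of_abs_sub_mul_le {f : ℕ → ℝ} {c C : ℝ}
    (h : ∀ N : ℕ, |f N - N * c| ≤ C) : Tendsto (fun N : ℕ => f N / N) atTop (𝓝 c) := by
  rw [← tendsto_sub_nhds_zero_iff]
  refine squeeze_zero_norm' ?_ (tendsto_const_div_atTop_nhds_zero_nat C)
  filter_upwards [eventually_gt_atTop 0] with N hN
  have hN' : (0 : ℝ) < N := Nat.cast_pos.2 hN
  rw [Real.norm_eq_abs, div_sub' hN'.ne', abs_div, abs_of_pos hN']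
  exact div_le_div_of_nonneg_right (h N) hN'.le

theorem relDensTo_of_abs_count_sub_mul_le {A : Set ℕ} [DecidablePred (· ∈ A)] {c C : ℝ}
    (h : ∀ N, |(Nat.count (· ∈ A) N : ℝ) - N * c| ≤ C) : relDensTo A c := by
  refine tendsto_div_natCast_of_abs_sub_mul_le (C := C + |c| + 1) fun N => ?_
  have hsum : ∑ n ∈ Icc 1 N, A.indicator (fun _ => (1 : ℝ)) n
      = Nat.count (· ∈ A) (N + 1) - A.indicator (fun _ => 1) 0 := by
    rw [Nat.count_eq_card_filter_range, natCast_card_filter, range_eq_Ico,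
      sum_eq_sum_Ico_succ_bot N.succ_pos, zero_add, Nat.succ_eq_add_one, Ico_add_one_right_eq_Icc]
    simp [Set.indicator_apply]
  have h0 : |A.indicator (fun _ => (1 : ℝ)) 0| ≤ 1 := by
    unfold Set.indicator
    split_ifs <;> norm_num
  rw [hsum]
  calc _ = |((Nat.count (· ∈ A) (N + 1) : ℝ) - (N + 1 : ℕ) * c) + c
        - A.indicator (fun _ => 1) 0| := by push_cast; ring_nf
    _ ≤ C + |c| + 1 := by
      grw [abs_sub, abs_add_le, h, h0]

theorem abs_count_sub_mul_le_of_periodic {p : ℕ → Prop} [DecidablePred p] {P : ℕ} (hP : 0 < P)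
    (hp : Function.Periodic p P) (N : ℕ) :
    |(Nat.count p N : ℝ) - N * (Nat.count p P / P)| ≤ P := by
  -- The error term is `P`-periodic, so it suffices to bound it on `[0, P)`.
  have hf : Function.Periodic
      (fun N : ℕ => (Nat.count p N : ℝ) - N * (Nat.count p P / P)) P := by
    intro N
    have hshift : Nat.count (fun k => p (k + P)) N = Nat.count p N := by
      congr 1; exact funext hp
    simp only [Nat.count_add', hshift]
    push_cast
    field_simp
    ring
  rw [← hf.map_mod_nat N]
  have hP' : (0 : ℝ) < P := by exact_mod_cast hP
  have hr : ((N % P : ℕ) : ℝ) ≤ P := by exact_mod_cast (N.mod_lt hP).le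
  have hcP : (Nat.count p P : ℝ) / P ≤ 1 :=
    div_le_one_of_le₀ (by exact_mod_cast Nat.count_le p) hP'.le
  refine abs_sub_le_of_nonneg_of_le (by positivity) ?_ (by positivity) ?_
  · exact (Nat.cast_le.2 (Nat.count_le p)).trans hr
  · simpa using mul_le_mul hr hcP (by positivity) hP'.le

theorem relDensTo_of_periodic {A : Set ℕ} [DecidablePred (· ∈ A)] {P : ℕ} (hP : 0 < P)
    (hA : Function.Periodic (· ∈ A) P) : relDensTo A (Nat.count (· ∈ A) P / P) :=
  relDensTo_of_abs_count_sub_mul_le (abs_count_sub_mul_le_of_periodic hP hA)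

theorem toFinset_bitIndices_subset_range_iff {n J : ℕ} :
    n.bitIndices.toFinset ⊆ range J ↔ n < 2 ^ J := by
  constructor
  · intro h
    rw [← sum_toFinset_bitIndices_two_pow n]
    exact Nat.geomSum_lt le_rfl fun k hk => mem_range.1 (h hk)
  · intro h k hk
    exact mem_range.2 <| (Nat.pow_lt_pow_iff_right (by norm_num)).1 <|
      (Nat.two_pow_le_of_mem_bitIndices (List.mem_toFinset.1 hk)).trans_lt h

theorem periodic_forall_testBit {T : Finset ℕ} {J : ℕ} (hT : T ⊆ range J) :
    Function.Periodic (fun n => ∀ t ∈ T, n.testBit t) (2 ^ J) := by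
  intro n
  refine propext (forall₂_congr fun t ht => ?_)
  rw [add_comm, Nat.testBit_two_pow_add_gt (mem_range.1 (hT ht))]

theorem count_forall_testBit_two_pow {T : Finset ℕ} {J : ℕ} (hT : T ⊆ range J) :
    Nat.count (fun n => ∀ t ∈ T, n.testBit t) (2 ^ J) = 2 ^ (J - #T) := by
  rw [Nat.count_eq_card_filter_range, ← card_range J, ← card_Icc_finset hT]
  refine card_equiv equivBitIndices fun n => ?_
  rw [mem_filter, mem_range, mem_Icc, equivBitIndices_apply, toFinset_bitIndices_subset_range_iff,
    and_comm]
  simp [subset_iff]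

theorem relDensTo_forall_testBit (T : Finset ℕ) :
    relDensTo {n | ∀ t ∈ T, n.testBit t} (2 ^ (-(#T : ℤ))) := by
  obtain ⟨J, hT⟩ := exists_nat_subset_range T
  have hdens := relDensTo_of_periodic (A := {n | ∀ t ∈ T, n.testBit t}) (Nat.two_pow_pos J)
    (periodic_forall_testBit hT)
  convert hdens using 1
  simp only [Set.mem_ofPred_eq, count_forall_testBit_two_pow hT]
  push_cast
  rw [pow_sub₀ _ two_ne_zero (by simpa using card_le_card hT), zpow_neg, zpow_natCast]
  field_simp

theorem binDigitSet_eq_setOf_testBit (j : ℕ) : binDigitSet j = {n | n.testBit (j - 1)} := by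
  ext n
  simp [binDigitSet, Nat.testBit_eq_decide_div_mod_eq]

theorem binary_digits_of_naturals_independent :
    (∀ j : ℕ, 1 ≤ j → relDensTo (binDigitSet j) (1 / 2)) ∧
    (∀ (m : ℕ) (j : Fin m → ℕ), (∀ i, 1 ≤ j i) → StrictMono j →
      relDensTo (⋂ i, binDigitSet (j i)) ((2 : ℝ) ^ (-(m : ℤ)))) := by
  refine ⟨fun j _ => ?_, fun m j hj hmono => ?_⟩
  · simpa [binDigitSet_eq_setOf_testBit] using relDensTo_forall_testBit {j - 1}
  · have hinj : Function.Injective fun i => j i - 1 := fun a b hab =>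
      hmono.injective (by have := hj a; have := hj b; simp only at hab; omega)
    have hdens := relDensTo_forall_testBit (univ.image fun i => j i - 1)
    rw [card_image_of_injective _ hinj, card_univ, Fintype.card_fin] at hdens
    convert hdens using 1
    ext n
    simp [binDigitSet_eq_setOf_testBit]
end

section
/- Convolution formula for independent relatively measurable sequences: if x, y : ℕ → ℤ are bounded, relatively measurable, and μ_R-independent, then ρ_{x+y}(k) = Σ_{j∈ℤ} ρ_x(j) ρ_y(k−j) for all k ∈ ℤ, where ρ_x(k) := μ_R({n : x_n = k}). -/
open Finset

lemma relDensTo_unique {A : Set ℕ} {c c' : ℝ} (h : relDensTo A c) (h' : relDensTo A c') :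
    c = c' :=
  tendsto_nhds_unique h h'

lemma relDensTo_empty : relDensTo ∅ 0 := by
  simp [relDensTo]

lemma relDensTo_biUnion {ι : Type*} {s : Finset ι} {A : ι → Set ℕ} {c : ι → ℝ}
    (hA : ∀ i ∈ s, relDensTo (A i) (c i)) (hdisj : (s : Set ι).PairwiseDisjoint A) :
    relDensTo (⋃ i ∈ s, A i) (∑ i ∈ s, c i) := by
  have hcount : ∀ N : ℕ, (∑ n ∈ Icc 1 N, (⋃ i ∈ s, A i).indicator (fun _ => (1 : ℝ)) n) / N
      = ∑ i ∈ s, (∑ n ∈ Icc 1 N, (A i).indicator (fun _ => (1 : ℝ)) n) / N := fun N => by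
    simp only [Finset.indicator_biUnion_apply s A hdisj, ← Finset.sum_div]
    rw [Finset.sum_comm]
  simpa only [relDensTo, hcount] using tendsto_finsetSum s hA

def RelIndependent (x y : ℕ → ℤ) : Prop :=
  ∀ I J : Set ℝ, I.OrdConnected → J.OrdConnected →
    ∃ cI cJ : ℝ, relDensTo {n : ℕ | (x n : ℝ) ∈ I} cI ∧
      relDensTo {n : ℕ | (y n : ℝ) ∈ J} cJ ∧
      relDensTo {n : ℕ | (x n : ℝ) ∈ I ∧ (y n : ℝ) ∈ J} (cI * cJ)

namespace RelIndependent

variable {x y : ℕ → ℤ} (h : RelIndependent x y)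
include h

lemma exists_relDensTo_eq_and_eq (j m : ℤ) :
    ∃ a b : ℝ, relDensTo {n | x n = j} a ∧ relDensTo {n | y n = m} b ∧
      relDensTo {n | x n = j ∧ y n = m} (a * b) := by
  simpa only [Set.mem_singleton_iff, Int.cast_inj] using
    h {(j : ℝ)} {(m : ℝ)} Set.ordConnected_singleton Set.ordConnected_singleton

lemma exists_relDensTo_fst_eq (j : ℤ) : ∃ a, relDensTo {n | x n = j} a :=
  let ⟨a, _, ha, _⟩ := h.exists_relDensTo_eq_and_eq j 0
  ⟨a, ha⟩

lemma exists_relDensTo_snd_eq (m : ℤ) : ∃ b, relDensTo {n | y n = m} b :=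
  let ⟨_, b, _, hb, _⟩ := h.exists_relDensTo_eq_and_eq 0 m
  ⟨b, hb⟩

lemma relDensTo_eq_and_eq_mul {j m : ℤ} {a b : ℝ} (ha : relDensTo {n | x n = j} a)
    (hb : relDensTo {n | y n = m} b) : relDensTo {n | x n = j ∧ y n = m} (a * b) := by
  obtain ⟨a', b', ha', hb', hab⟩ := h.exists_relDensTo_eq_and_eq j m
  rwa [relDensTo_unique ha' ha, relDensTo_unique hb' hb] at hab

end RelIndependent

lemma relDensTo_add_eq {x y : ℕ → ℤ} {K : ℤ} (hbx : ∀ n, |x n| ≤ K) {ρ : ℤ → ℤ → ℝ}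
    (hpair : ∀ j m, relDensTo {n | x n = j ∧ y n = m} (ρ j m)) (k : ℤ) :
    relDensTo {n | x n + y n = k} (∑ j ∈ Icc (-K) K, ρ j (k - j)) := by
  have hcover : {n | x n + y n = k} = ⋃ j ∈ Icc (-K) K, {n | x n = j ∧ y n = k - j} := by
    ext n
    simp only [Set.mem_ofPred_eq, Set.mem_iUnion, Finset.mem_Icc, exists_prop]
    constructor
    · exact fun hk => ⟨x n, abs_le.mp (hbx n), rfl, by omega⟩
    · rintro ⟨j, -, rfl, hy⟩
      omega
  have hdisj : (Icc (-K) K : Set ℤ).PairwiseDisjoint fun j => {n | x n = j ∧ y n = k - j} :=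
    fun i _ j _ hij => Set.disjoint_left.mpr fun n hi hj => hij (hi.1.symm.trans hj.1)
  rw [hcover]
  exact relDensTo_biUnion (fun j _ => hpair j (k - j)) hdisj

lemma eq_zero_of_relDensTo_of_abs_le {x : ℕ → ℤ} {K : ℤ} (hbx : ∀ n, |x n| ≤ K) {j : ℤ}
    (hj : j ∉ Icc (-K) K) {a : ℝ} (ha : relDensTo {n | x n = j} a) : a = 0 := by
  have hempty : {n | x n = j} = ∅ :=
    Set.eq_empty_of_forall_notMem fun n hn => hj (Finset.mem_Icc.mpr (hn ▸ abs_le.mp (hbx n)))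
  exact relDensTo_unique ha (hempty ▸ relDensTo_empty)

theorem convolution_formula_for_independent_sequences_general
    (x y : ℕ → ℤ) (K : ℤ) (hbx : ∀ n, |x n| ≤ K)
    -- `x` and `y` are relatively measurable and `μ_R`-independent: for all intervals
    -- `I, J ⊆ ℝ` the preimages have densities and the product rule holds.
    (hindep : ∀ I J : Set ℝ, I.OrdConnected → J.OrdConnected →
      ∃ cI cJ : ℝ, relDensTo {n : ℕ | (x n : ℝ) ∈ I} cI ∧
        relDensTo {n : ℕ | (y n : ℝ) ∈ J} cJ ∧
        relDensTo {n : ℕ | (x n : ℝ) ∈ I ∧ (y n : ℝ) ∈ J} (cI * cJ)) :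
    ∃ ρx ρy ρxy : ℤ → ℝ,
      (∀ k : ℤ, relDensTo {n : ℕ | x n = k} (ρx k)) ∧
      (∀ k : ℤ, relDensTo {n : ℕ | y n = k} (ρy k)) ∧
      (∀ k : ℤ, relDensTo {n : ℕ | x n + y n = k} (ρxy k)) ∧
      (∀ k : ℤ, ρxy k = ∑' j : ℤ, ρx j * ρy (k - j)) := by
  have hxy : RelIndependent x y := hindep
  choose ρx hρx using hxy.exists_relDensTo_fst_eq
  choose ρy hρy using hxy.exists_relDensTo_snd_eq
  refine ⟨ρx, ρy, fun k => ∑ j ∈ Icc (-K) K, ρx j * ρy (k - j), hρx, hρy, ?_, fun k => ?_⟩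
  · exact relDensTo_add_eq hbx fun j m => hxy.relDensTo_eq_and_eq_mul (hρx j) (hρy m)
  · refine (tsum_eq_sum fun j hj => ?_).symm
    rw [eq_zero_of_relDensTo_of_abs_le hbx hj (hρx j), zero_mul]

theorem convolution_formula_for_independent_sequences
    (x y : ℕ → ℤ) (K : ℤ) (hbx : ∀ n, |x n| ≤ K) (hby : ∀ n, |y n| ≤ K)
    -- `x` and `y` are relatively measurable and `μ_R`-independent: for all intervals
    -- `I, J ⊆ ℝ` the preimages have densities and the product rule holds.
    (hindep : ∀ I J : Set ℝ, I.OrdConnected → J.OrdConnected →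
      ∃ cI cJ : ℝ, relDensTo {n : ℕ | (x n : ℝ) ∈ I} cI ∧
        relDensTo {n : ℕ | (y n : ℝ) ∈ J} cJ ∧
        relDensTo {n : ℕ | (x n : ℝ) ∈ I ∧ (y n : ℝ) ∈ J} (cI * cJ)) :
    ∃ ρx ρy ρxy : ℤ → ℝ,
      (∀ k : ℤ, relDensTo {n : ℕ | x n = k} (ρx k)) ∧
      (∀ k : ℤ, relDensTo {n : ℕ | y n = k} (ρy k)) ∧
      (∀ k : ℤ, relDensTo {n : ℕ | x n + y n = k} (ρxy k)) ∧
      (∀ k : ℤ, ρxy k = ∑' j : ℤ, ρx j * ρy (k - j)) :=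
  convolution_formula_for_independent_sequences_general x y K hbx hindep
end

section
/- The two formulations of the Erdős–Kac theorem are equivalent in the following direction: the Erdős–Kac theorem with normalization at N implies the version with normalization at n, i.e., assuming lim_{N→∞} (1/N)|{n ≤ N : (ω(n) − ln ln N)/√(ln ln N) ≤ b}| = Φ(b) for all b ∈ ℝ, it follows that for all real a < b, lim_{N→∞} (1/N) |{n ∈ {1,…,N} : a ≤ (ω(n) − ln ln n)/√(ln ln n) ≤ b}| = (1/√(2π)) ∫_a^b e^{−x²/2} dx. -/
open Filter

/-- `ω(n)`: the number of distinct prime factors of `n`. -/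
def omegaPF (n : ℕ) : ℕ := n.primeFactors.card

/-- The standard normal distribution function. -/
noncomputable def stdNormalCDF (b : ℝ) : ℝ :=
  (1 / Real.sqrt (2 * Real.pi)) * ∫ x in Set.Iic b, Real.exp (-x ^ 2 / 2)

/-! For `√N < n ≤ N` we have `log log N - log 2 ≤ log log n ≤ log log N`, so the
normalizations `f(n) = (ω(n) - log log n) / √(log log n)` and
`g_N(n) = (ω(n) - log log N) / √(log log N)` differ by `O((M + 1) / √(log log N))`
wherever either of them is at most `M` in absolute value. As the `n ≤ √N` have density
zero, the frequency of `a ≤ f(n) ≤ b` is squeezed between the frequencies of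
`a ± δ < g_N(n) ≤ b ∓ δ`, which tend to `Φ(b ∓ δ) - Φ(a ± δ)`; continuity of `Φ` lets
`δ → 0`. -/

open Finset Real Topology

noncomputable def relFreq (N : ℕ) (p : ℕ → Prop) [DecidablePred p] : ℝ :=
  (∑ n ∈ Icc 1 N, if p n then (1 : ℝ) else 0) / N

section RelFreq

variable {N : ℕ} {p q r : ℕ → Prop} [DecidablePred p] [DecidablePred q] [DecidablePred r]

theorem relFreq_nonneg : 0 ≤ relFreq N p := by
  unfold relFreq
  positivity

theorem relFreq_le_add (h : ∀ n ∈ Icc 1 N, p n → q n ∨ r n) :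
    relFreq N p ≤ relFreq N q + relFreq N r := by
  unfold relFreq
  rw [← add_div, ← sum_add_distrib]
  gcongr with n hn
  have := h n hn
  split_ifs <;> simp_all

theorem relFreq_and_not_add (h : ∀ n, q n → p n) :
    relFreq N (fun n => p n ∧ ¬q n) + relFreq N q = relFreq N p := by
  unfold relFreq
  rw [← add_div, ← sum_add_distrib]
  congr 1
  refine sum_congr rfl fun n _ => ?_
  have := h n
  by_cases p n <;> by_cases q n <;> simp_all

theorem relFreq_le_le_div (K : ℕ) : relFreq N (· ≤ K) ≤ K / N := by
  unfold relFreq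
  gcongr
  rw [sum_boole, Nat.cast_le]
  calc #{n ∈ Icc 1 N | n ≤ K} ≤ #(Icc 1 K) := card_le_card fun n hn => by simp_all
    _ = K := by simp

end RelFreq

section Sandwich

variable {N K : ℕ} {f g : ℕ → ℝ} {a b δ : ℝ}

theorem relFreq_le_of_close (hab : a ≤ b) (hδ : 0 ≤ δ)
    (h : ∀ n ∈ Icc 1 N, K < n → a ≤ f n → f n ≤ b → a - δ < g n ∧ g n ≤ b + δ) :
    relFreq N (fun n => a ≤ f n ∧ f n ≤ b)
      ≤ relFreq N (· ≤ K) + (relFreq N (g · ≤ b + δ) - relFreq N (g · ≤ a - δ)) := by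
  rw [← relFreq_and_not_add (p := (g · ≤ b + δ)) (q := (g · ≤ a - δ))
    fun n hn => hn.trans (by linarith), add_sub_cancel_right]
  refine relFreq_le_add fun n hn hf => ?_
  by_cases hK : n ≤ K
  · exact .inl hK
  · obtain ⟨hlow, hup⟩ := h n hn (not_le.1 hK) hf.1 hf.2
    exact .inr ⟨hup, not_le.2 hlow⟩

theorem sub_relFreq_le_of_close
    (h : ∀ n ∈ Icc 1 N, K < n → a + δ < g n → g n ≤ b - δ → a ≤ f n ∧ f n ≤ b) :
    relFreq N (g · ≤ b - δ) - relFreq N (g · ≤ a + δ)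
      ≤ relFreq N (· ≤ K) + relFreq N (fun n => a ≤ f n ∧ f n ≤ b) := by
  have hsplit : relFreq N (g · ≤ b - δ)
      ≤ relFreq N (fun n => g n ≤ b - δ ∧ ¬g n ≤ a + δ) + relFreq N (g · ≤ a + δ) :=
    relFreq_le_add fun n _ hn => (em (g n ≤ a + δ)).symm.imp (⟨hn, ·⟩) id
  have hmid : relFreq N (fun n => g n ≤ b - δ ∧ ¬g n ≤ a + δ)
      ≤ relFreq N (· ≤ K) + relFreq N (fun n => a ≤ f n ∧ f n ≤ b) :=
    relFreq_le_add fun n hn hg => (le_or_gt n K).imp id (h n hn · (not_le.1 hg.2) hg.1)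
  linarith

end Sandwich

theorem tendsto_relFreq_of_eventually_close {f : ℕ → ℝ} {g : ℕ → ℕ → ℝ} {F : ℝ → ℝ}
    {K : ℕ → ℕ} (hF : Continuous F)
    (hg : ∀ c, Tendsto (fun N => relFreq N (g N · ≤ c)) atTop (𝓝 (F c)))
    (hK : Tendsto (fun N => (K N : ℝ) / N) atTop (𝓝 0))
    (hclose : ∀ M δ, 0 < δ → ∀ᶠ N in atTop, ∀ n, K N < n → n ≤ N →
      (|f n| ≤ M ∨ |g N n| ≤ M) → |g N n - f n| < δ)
    {a b : ℝ} (hab : a ≤ b) :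
    Tendsto (fun N => relFreq N (fun n => a ≤ f n ∧ f n ≤ b)) atTop (𝓝 (F b - F a)) := by
  have hexc : Tendsto (fun N => relFreq N (· ≤ K N)) atTop (𝓝 0) :=
    squeeze_zero (fun _ => relFreq_nonneg) (fun _ => relFreq_le_le_div _) hK
  have hF_shift (s : ℝ) : Tendsto (fun δ => F (b + s * δ) - F (a - s * δ)) (𝓝[>] 0)
      (𝓝 (F b - F a)) := by
    have hcont : Continuous fun δ => F (b + s * δ) - F (a - s * δ) := by fun_prop
    exact (hcont.tendsto' 0 _ (by simp)).mono_left nhdsWithin_le_nhds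
  rw [tendsto_order]
  constructor
  · intro c hc
    obtain ⟨δ, hcδ, hδ⟩ :=
      ((hF_shift (-1)).eventually (lt_mem_nhds hc)).and self_mem_nhdsWithin |>.exists
    have hlim := ((hg (b - δ)).sub (hg (a + δ))).sub hexc
    rw [sub_zero] at hlim
    filter_upwards [hlim.eventually (lt_mem_nhds (by simpa [sub_eq_add_neg] using hcδ)),
      hclose (max |a + δ| |b - δ|) δ hδ] with N hN hcl
    refine hN.trans_le <| sub_le_iff_le_add'.2 <|
      sub_relFreq_le_of_close fun n hn hKn h1 h2 => ?_
    have := abs_lt.1 (hcl n hKn (mem_Icc.1 hn).2 (.inr (abs_le_max_abs_abs h1.le h2)))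
    constructor <;> linarith
  · intro c hc
    obtain ⟨δ, hcδ, hδ⟩ :=
      ((hF_shift 1).eventually (gt_mem_nhds hc)).and self_mem_nhdsWithin |>.exists
    have hlim := hexc.add ((hg (b + δ)).sub (hg (a - δ)))
    rw [zero_add] at hlim
    filter_upwards [hlim.eventually (gt_mem_nhds (by simpa using hcδ)),
      hclose (max |a| |b|) δ hδ] with N hN hcl
    refine (relFreq_le_of_close hab hδ.le fun n hn hKn h1 h2 => ?_).trans_lt hN
    have := abs_lt.1 (hcl n hKn (mem_Icc.1 hn).2 (.inl (abs_le_max_abs_abs h1 h2)))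
    constructor <;> linarith

theorem integrable_exp_neg_sq_div_two :
    MeasureTheory.Integrable fun x : ℝ => exp (-x ^ 2 / 2) := by
  simpa [neg_div, div_eq_inv_mul] using integrable_exp_neg_mul_sq (b := 1 / 2) (by norm_num)

theorem stdNormalCDF_sub_stdNormalCDF (a b : ℝ) :
    stdNormalCDF b - stdNormalCDF a = 1 / √(2 * π) * ∫ x in a..b, exp (-x ^ 2 / 2) := by
  rw [stdNormalCDF, stdNormalCDF, ← mul_sub, intervalIntegral.integral_Iic_sub_Iic
    integrable_exp_neg_sq_div_two.integrableOn integrable_exp_neg_sq_div_two.integrableOn]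

theorem continuous_stdNormalCDF : Continuous stdNormalCDF := by
  have hprim : stdNormalCDF =
      fun b => stdNormalCDF 0 + 1 / √(2 * π) * ∫ x in (0 : ℝ)..b, exp (-x ^ 2 / 2) :=
    funext fun b => by rw [← stdNormalCDF_sub_stdNormalCDF, add_sub_cancel]
  rw [hprim]
  exact continuous_const.add <| continuous_const.mul <| intervalIntegral.continuous_primitive
    (fun _ _ => integrable_exp_neg_sq_div_two.intervalIntegrable) 0

theorem abs_normalized_sub_le {w ℓ L M : ℝ} (hℓ : 1 ≤ ℓ) (hℓL : ℓ ≤ L)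
    (h : |(w - ℓ) / √ℓ| ≤ M ∨ |(w - L) / √L| ≤ M) :
    |(w - L) / √L - (w - ℓ) / √ℓ| ≤ (M + 1) * (L - ℓ) / √ℓ := by
  set u := √ℓ
  set v := √L
  have hu : 1 ≤ u := one_le_sqrt.2 hℓ
  have huv : u ≤ v := sqrt_le_sqrt hℓL
  have hvu : v - u ≤ L - ℓ := by
    have := sq_sqrt (zero_le_one.trans hℓ)
    have := sq_sqrt (zero_le_one.trans (hℓ.trans hℓL))
    nlinarith
  have hu0 : 0 < u := by linarith
  have hv0 : 0 < v := by linarith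
  set x := (w - ℓ) / u
  set y := (w - L) / v
  have hx : x * u = w - ℓ := div_mul_cancel₀ _ hu0.ne'
  have hy : y * v = w - L := div_mul_cancel₀ _ hv0.ne'
  clear_value x y u v
  rw [le_div_iff₀ hu0]
  rcases h with hxM | hyM
  · calc |y - x| * u
        _ ≤ |y - x| * v := by gcongr
        _ = |x * (v - u) + (L - ℓ)| := by
          rw [← abs_of_pos hv0, ← abs_mul, abs_of_pos hv0, ← abs_neg]
          congr 1
          linear_combination hx - hy
        _ ≤ |x| * (v - u) + (L - ℓ) := by
          grw [abs_add_le, abs_mul, abs_of_nonneg (sub_nonneg.2 huv),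
            abs_of_nonneg (sub_nonneg.2 hℓL)]
        _ ≤ (M + 1) * (L - ℓ) := by nlinarith [abs_nonneg x]
  · calc |y - x| * u
        _ = |y * (v - u) + (L - ℓ)| := by
          rw [← abs_of_pos hu0, ← abs_mul, abs_of_pos hu0, ← abs_neg]
          congr 1
          linear_combination hx - hy
        _ ≤ |y| * (v - u) + (L - ℓ) := by
          grw [abs_add_le, abs_mul, abs_of_nonneg (sub_nonneg.2 huv),
            abs_of_nonneg (sub_nonneg.2 hℓL)]
        _ ≤ (M + 1) * (L - ℓ) := by nlinarith [abs_nonneg y]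

theorem log_log_sub_log_two_le {x y : ℝ} (hx : 1 < x) (hxy : x ≤ y) (hy : y ≤ x ^ 2) :
    log (log y) - log 2 ≤ log (log x) := by
  have hlogx : 0 < log x := log_pos hx
  have hlogy : log y ≤ 2 * log x := by
    have := log_le_log (by linarith) hy
    rwa [log_pow, Nat.cast_ofNat] at this
  rw [sub_le_iff_le_add, ← log_mul (by positivity) two_ne_zero, mul_comm]
  exact log_le_log (log_pos (hx.trans_le hxy)) hlogy

theorem tendsto_natSqrt_div_self : Tendsto (fun N : ℕ => (Nat.sqrt N : ℝ) / N) atTop (𝓝 0) := by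
  refine squeeze_zero (g := fun N : ℕ => 1 / √(N : ℝ)) (fun _ => by positivity)
    (fun N => ?_)
    (tendsto_const_nhds.div_atTop (tendsto_sqrt_atTop.comp tendsto_natCast_atTop_atTop))
  rw [← sqrt_div_self']
  gcongr
  exact nat_sqrt_le_real_sqrt

theorem eventually_abs_loglog_normalized_sub_lt (w : ℕ → ℝ) (M δ : ℝ) (hδ : 0 < δ) :
    ∀ᶠ N : ℕ in atTop, ∀ n, Nat.sqrt N < n → n ≤ N →
      (|(w n - log (log n)) / √(log (log n))| ≤ M ∨
        |(w n - log (log N)) / √(log (log N))| ≤ M) →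
      |(w n - log (log N)) / √(log (log N)) - (w n - log (log n)) / √(log (log n))| < δ := by
  have hL : Tendsto (fun N : ℕ => log (log N)) atTop atTop :=
    (tendsto_log_atTop.comp tendsto_log_atTop).comp tendsto_natCast_atTop_atTop
  have hbound :
      Tendsto (fun N : ℕ => (M + 1) * log 2 / √(log (log N) - log 2)) atTop (𝓝 0) :=
    tendsto_const_nhds.div_atTop (tendsto_sqrt_atTop.comp (tendsto_atTop_add_const_right _ _ hL))
  filter_upwards [hL.eventually_ge_atTop (1 + log 2), hbound.eventually (gt_mem_nhds hδ),
    eventually_ge_atTop 1] with N hLN hδN hN n hKn hnN hM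
  have hM0 : 0 ≤ M := hM.elim (abs_nonneg _).trans (abs_nonneg _).trans
  have hn : (1 : ℝ) < n := by
    have := Nat.sqrt_pos.2 hN
    exact_mod_cast (by omega : 1 < n)
  have hnN' : (n : ℝ) ≤ N := by exact_mod_cast hnN
  have hNn : (N : ℝ) ≤ (n : ℝ) ^ 2 := by exact_mod_cast (Nat.sqrt_lt'.1 hKn).le
  have hlow := log_log_sub_log_two_le hn hnN' hNn
  have hup : log (log n) ≤ log (log N) :=
    log_le_log (log_pos hn) (log_le_log (by linarith) hnN')
  calc _ ≤ (M + 1) * (log (log N) - log (log n)) / √(log (log n)) :=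
        abs_normalized_sub_le (by linarith) hup hM
    _ ≤ (M + 1) * log 2 / √(log (log N) - log 2) := by
        gcongr
        · exact sqrt_pos.2 (by linarith)
        · linarith
    _ < δ := hδN

theorem erdos_kac_normalization_at_N_implies_at_n
    (hEK : ∀ b : ℝ,
      Tendsto (fun N : ℕ =>
          (∑ n ∈ Finset.Icc 1 N,
            if ((omegaPF n : ℝ) - Real.log (Real.log N)) / Real.sqrt (Real.log (Real.log N)) ≤ b
            then (1 : ℝ) else 0) / N)
        atTop (nhds (stdNormalCDF b))) :
    ∀ a b : ℝ, a < b →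
      Tendsto (fun N : ℕ =>
          (∑ n ∈ Finset.Icc 1 N,
            if a ≤ ((omegaPF n : ℝ) - Real.log (Real.log n)) / Real.sqrt (Real.log (Real.log n)) ∧
               ((omegaPF n : ℝ) - Real.log (Real.log n)) / Real.sqrt (Real.log (Real.log n)) ≤ b
            then (1 : ℝ) else 0) / N)
        atTop
        (nhds ((1 / Real.sqrt (2 * Real.pi)) * ∫ x in a..b, Real.exp (-x ^ 2 / 2))) := by
  intro a b hab
  rw [← stdNormalCDF_sub_stdNormalCDF]
  exact tendsto_relFreq_of_eventually_close continuous_stdNormalCDF hEK tendsto_natSqrt_div_self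
    (eventually_abs_loglog_normalized_sub_lt (fun n => omegaPF n)) hab.le
end
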